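/- arXiv:1911.04546 — 2 statements merged into one kernel-verified Lean document; each statement's English description precedes it below -/
import Mathlib

section
/- For every k ≥ 2, the graph obtained from the complete graph on 2k+1 vertices by removing a perfect matching on 2k−2 of its vertices (a matching of size k−1) is a SET graph. -/
open SimpleGraph

variable {V : Type*}

/-- A path decomposition of a simple graph `G`: a list of nontrivial paths of `G`
that are pairwise edge-disjoint and together cover every edge of `G`. -/
structure PathDecomp (G : SimpleGraph V) where
  paths : List (Σ a b : V, G.Walk a b)
  nontrivial : ∀ p ∈ paths, 0 < p.2.2.length
  isPath : ∀ p ∈ paths, p.2.2.IsPath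
  edgeDisjoint : paths.Pairwise fun p q => ∀ e, e ∈ p.2.2.edges → e ∉ q.2.2.edges
  covers : ∀ e ∈ G.edgeSet, ∃ p ∈ paths, e ∈ p.2.2.edges

/-- Cardinality of a path decomposition. -/
def pdCard {G : SimpleGraph V} (D : PathDecomp G) : ℕ := D.paths.length

/-- `ends D u` is the number of paths in `D` having `u` as an end vertex. -/
def ends [DecidableEq V] {G : SimpleGraph V} (D : PathDecomp G) (u : V) : ℕ :=
  (D.paths.filter fun p => p.1 = u ∨ p.2.1 = u).length

/-- The path number: minimum cardinality of a path decomposition. -/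
noncomputable def pn (G : SimpleGraph V) : ℕ :=
  sInf {n | ∃ D : PathDecomp G, pdCard D = n}

/-- Degree as the `ncard` of the neighbor set (no decidability needed). -/
noncomputable def ndeg (G : SimpleGraph V) (v : V) : ℕ := {w | G.Adj v w}.ncard

/-- A SET graph: the set of even-degree vertices consists of exactly three
mutually adjacent vertices, and every odd-degree vertex has at least two
even-degree neighbors. -/
def IsSETGraph (G : SimpleGraph V) : Prop :=
  (∃ a b c : V, a ≠ b ∧ a ≠ c ∧ b ≠ c ∧
      {v : V | Even (ndeg G v)} = {a, b, c} ∧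
      G.Adj a b ∧ G.Adj a c ∧ G.Adj b c) ∧
  ∀ v : V, Odd (ndeg G v) →
    ∃ w₁ w₂ : V, w₁ ≠ w₂ ∧ G.Adj v w₁ ∧ G.Adj v w₂ ∧
      Even (ndeg G w₁) ∧ Even (ndeg G w₂)

/-! Deleting a matching of `k - 1` edges from `K_{2k+1}` drops the degree of the `2k - 2` matched
vertices to the odd number `2k - 1` and leaves the three unmatched vertices with even degree `2k`.
Those three are adjacent to every other vertex, so they form the even triangle, and every odd
vertex sees all of them. -/

section Matching

variable (M : Set (Sym2 V))

def matchedVerts : Set V := {v | ∃ e ∈ M, v ∈ e}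

theorem neighborSet_top_deleteEdges (v : V) :
    {w | ((⊤ : SimpleGraph V).deleteEdges M).Adj v w} = ({v} ∪ {w | s(v, w) ∈ M})ᶜ := by
  ext w
  simp [eq_comm]

theorem ndeg_top_deleteEdges_add [Finite V] (v : V) :
    ndeg ((⊤ : SimpleGraph V).deleteEdges M) v + ({v} ∪ {w | s(v, w) ∈ M}).ncard =
      Nat.card V := by
  rw [ndeg, neighborSet_top_deleteEdges, Set.ncard_compl_add_ncard]

theorem top_deleteEdges_adj_of_not_mem_matchedVerts {v w : V} (hv : v ∉ matchedVerts M)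
    (hvw : v ≠ w) : ((⊤ : SimpleGraph V).deleteEdges M).Adj v w :=
  (deleteEdges_adj ..).mpr ⟨hvw, fun h => hv ⟨_, h, Sym2.mem_mk_left v w⟩⟩

variable {M}

theorem ndeg_top_deleteEdges_of_not_mem_matchedVerts [Finite V] {v : V}
    (hv : v ∉ matchedVerts M) :
    ndeg ((⊤ : SimpleGraph V).deleteEdges M) v + 1 = Nat.card V := by
  have hpartners : {w | s(v, w) ∈ M} = ∅ :=
    Set.eq_empty_of_forall_notMem fun w h => hv ⟨_, h, Sym2.mem_mk_left v w⟩
  simpa [hpartners] using ndeg_top_deleteEdges_add M v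

theorem ndeg_top_deleteEdges_of_mem_matchedVerts [Finite V] (hdiag : ∀ e ∈ M, ¬ e.IsDiag)
    (hdisj : M.Pairwise fun e f => ∀ v, v ∈ e → v ∉ f) {v : V} (hv : v ∈ matchedVerts M) :
    ndeg ((⊤ : SimpleGraph V).deleteEdges M) v + 2 = Nat.card V := by
  obtain ⟨e, he, hve⟩ := hv
  have hspec : s(v, Sym2.Mem.other hve) = e := Sym2.other_spec hve
  have hne : v ≠ Sym2.Mem.other hve :=
    fun h => hdiag e he (hspec ▸ h ▸ Sym2.mk_isDiag_iff.mpr rfl)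
  have hpartners : {w | s(v, w) ∈ M} = {Sym2.Mem.other hve} := by
    ext w
    refine ⟨fun hw => ?_, ?_⟩
    · by_contra hwe
      exact hdisj hw he (fun h => hwe (Sym2.congr_right.mp (h.trans hspec.symm))) v
        (Sym2.mem_mk_left v w) hve
    · rintro rfl
      show s(v, _) ∈ M
      rw [hspec]
      exact he
  rw [← ndeg_top_deleteEdges_add M v, hpartners, Set.singleton_union, Set.ncard_pair hne]

theorem even_ndeg_top_deleteEdges_iff [Finite V] (hdiag : ∀ e ∈ M, ¬ e.IsDiag)
    (hdisj : M.Pairwise fun e f => ∀ v, v ∈ e → v ∉ f) (hodd : Odd (Nat.card V)) (v : V) :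
    Even (ndeg ((⊤ : SimpleGraph V).deleteEdges M) v) ↔ v ∉ matchedVerts M := by
  by_cases hv : v ∈ matchedVerts M
  · rw [← ndeg_top_deleteEdges_of_mem_matchedVerts hdiag hdisj hv] at hodd
    simpa [hv, parity_simps] using hodd
  · rw [← ndeg_top_deleteEdges_of_not_mem_matchedVerts hv] at hodd
    simpa [hv, parity_simps] using hodd

theorem ncard_matchedVerts [Finite V] (hdiag : ∀ e ∈ M, ¬ e.IsDiag)
    (hdisj : M.Pairwise fun e f => ∀ v, v ∈ e → v ∉ f) :
    (matchedVerts M).ncard = 2 * M.ncard := by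
  classical
  have hM : M.Finite := Set.toFinite M
  have hunion : matchedVerts M = ↑(hM.toFinset.biUnion Sym2.toFinset) := by
    ext v
    simp [matchedVerts]
  rw [hunion, Set.ncard_coe_finset, Finset.card_biUnion, Finset.sum_congr rfl (g := fun _ => 2),
    Finset.sum_const, smul_eq_mul, ← Set.ncard_eq_toFinset_card _ hM, mul_comm]
  · intro e he
    exact Sym2.card_toFinset_of_not_isDiag e (hdiag e (hM.mem_toFinset.mp he))
  · intro e he f hf hef
    exact Finset.disjoint_left.mpr fun v hve hvf => hdisj (hM.mem_toFinset.mp he)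
      (hM.mem_toFinset.mp hf) hef v (Sym2.mem_toFinset.mp hve) (Sym2.mem_toFinset.mp hvf)

end Matching

theorem isSETGraph_of_even_eq_universal_triple {G : SimpleGraph V} {a b c : V}
    (hab : a ≠ b) (hac : a ≠ c) (hbc : b ≠ c) (heven : {v | Even (ndeg G v)} = {a, b, c})
    (huniv : ∀ x ∈ ({a, b, c} : Set V), ∀ y, x ≠ y → G.Adj x y) : IsSETGraph G := by
  have ha : a ∈ ({a, b, c} : Set V) := by simp
  have hb : b ∈ ({a, b, c} : Set V) := by simp
  refine ⟨⟨a, b, c, hab, hac, hbc, heven, huniv a ha b hab, huniv a ha c hac,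
    huniv b hb c hbc⟩, fun v hv => ?_⟩
  have hv : v ∉ ({a, b, c} : Set V) := by
    rw [← heven]
    exact Nat.not_even_iff_odd.mpr hv
  refine ⟨a, b, hab, (huniv a ha v ?_).symm, (huniv b hb v ?_).symm, ?_, ?_⟩
  · rintro rfl; exact hv ha
  · rintro rfl; exact hv hb
  · exact (heven ▸ ha : a ∈ {v | Even (ndeg G v)})
  · exact (heven ▸ hb : b ∈ {v | Even (ndeg G v)})

theorem complete_minus_matching_isSET (k : ℕ) (hk : 2 ≤ k)
    (M : Set (Sym2 (Fin (2 * k + 1))))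
    (hdiag : ∀ e ∈ M, ¬ e.IsDiag)
    (hcard : M.ncard = k - 1)
    (hdisj : M.Pairwise fun e f => ∀ v, v ∈ e → v ∉ f) :
    IsSETGraph ((⊤ : SimpleGraph (Fin (2 * k + 1))).deleteEdges M) := by
  have hodd : Odd (Nat.card (Fin (2 * k + 1))) := by simp
  have hunmatched : (matchedVerts M)ᶜ.ncard = 3 := by
    rw [Set.ncard_compl, ncard_matchedVerts hdiag hdisj, hcard, Nat.card_fin]
    omega
  obtain ⟨a, b, c, hab, hac, hbc, habc⟩ := Set.ncard_eq_three.mp hunmatched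
  refine isSETGraph_of_even_eq_universal_triple hab hac hbc ?_ ?_
  · rw [← habc]
    ext v
    exact even_ndeg_top_deleteEdges_iff hdiag hdisj hodd v
  · rw [← habc]
    exact fun x hx y hxy => top_deleteEdges_adj_of_not_mem_matchedVerts M hx hxy
end

section
/- Let G be a graph, u a vertex, B a set of edges incident to u, D' a path decomposition of G \ B, and A, A' disjoint subsets of B. If A is addible towards u with respect to D' with A-transformation D'', and A' is addible towards u with respect to D'', then A ∪ A' is addible towards u with respect to D'. -/
open SimpleGraph

variable {V : Type*}

/-- The set of edges joining `u` to the vertices of `S`. -/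
def incEdges [DecidableEq V] (u : V) (S : Finset V) : Set (Sym2 V) :=
  {e | ∃ b ∈ S, e = s(u, b)}

/-- `D` is the `A`-transformation of `D'` towards `u`. -/
def IsTransformTowards [DecidableEq V] (G : SimpleGraph V) (u : V) (S A : Finset V)
    (D' : PathDecomp (G.deleteEdges (incEdges u S)))
    (D : PathDecomp (G.deleteEdges (incEdges u (S \ A)))) : Prop :=
  pdCard D = pdCard D' ∧ ends D u = ends D' u + A.card ∧
  (∀ a ∈ A, ends D a + 1 = ends D' a) ∧
  ∀ w, w ≠ u → w ∉ A → ends D w = ends D' w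

/-- `D` is the `A`-transformation of `D'` outwards `u`. -/
def IsTransformOutwards [DecidableEq V] (G : SimpleGraph V) (u : V) (S A : Finset V)
    (D' : PathDecomp (G.deleteEdges (incEdges u S)))
    (D : PathDecomp (G.deleteEdges (incEdges u (S \ A)))) : Prop :=
  pdCard D = pdCard D' ∧ ends D u + A.card = ends D' u ∧
  (∀ a ∈ A, ends D a = ends D' a + 1) ∧
  ∀ w, w ≠ u → w ∉ A → ends D w = ends D' w

lemma pd_transport [DecidableEq V] (G : SimpleGraph V) (u : V) {S1 S2 : Finset V}
    (e : S1 = S2) (D : PathDecomp (G.deleteEdges (incEdges u S1))) :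
    ∃ D2 : PathDecomp (G.deleteEdges (incEdges u S2)),
      pdCard D2 = pdCard D ∧ ∀ v, ends D2 v = ends D v := by
  subst e; exact ⟨D, rfl, fun _ => rfl⟩

theorem addible_concatenation [DecidableEq V] (G : SimpleGraph V) (u : V)
    (B A A' : Finset V) (hA : A ⊆ B) (hA' : A' ⊆ B) (hAA' : Disjoint A A')
    (hB : ∀ b ∈ B, G.Adj u b)
    (D' : PathDecomp (G.deleteEdges (incEdges u B)))
    (D'' : PathDecomp (G.deleteEdges (incEdges u (B \ A))))
    (h1 : IsTransformTowards G u B A D' D'')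
    (h2 : ∃ D3 : PathDecomp (G.deleteEdges (incEdges u ((B \ A) \ A'))),
      IsTransformTowards G u (B \ A) A' D'' D3) :
    ∃ D : PathDecomp (G.deleteEdges (incEdges u (B \ (A ∪ A')))),
      IsTransformTowards G u B (A ∪ A') D' D := by
  obtain ⟨D3, h3⟩ := h2
  have e : (B \ A) \ A' = B \ (A ∪ A') := by
    ext x; simp [Finset.mem_sdiff]; tauto
  obtain ⟨D, hcard, hends⟩ := pd_transport G u e D3
  obtain ⟨h1c, h1u, h1a, h1w⟩ := h1
  obtain ⟨h3c, h3u, h3a, h3w⟩ := h3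
  refine ⟨D, ?_, ?_, ?_, ?_⟩
  · rw [hcard, h3c, h1c]
  · rw [hends, h3u, h1u, Finset.card_union_of_disjoint hAA']
    ring
  · intro a ha
    rw [Finset.mem_union] at ha
    rcases ha with ha | ha
    · have hau : a ≠ u := (hB a (hA ha)).ne'
      have haA' : a ∉ A' := fun h => (Finset.disjoint_left.mp hAA') ha h
      rw [hends, h3w a hau haA']
      exact h1a a ha
    · have hau : a ≠ u := (hB a (hA' ha)).ne'
      have haA : a ∉ A := fun h => (Finset.disjoint_left.mp hAA') h ha
      rw [hends, h3a a ha, h1w a hau haA]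
  · intro w hw hwA
    rw [Finset.mem_union] at hwA
    push_neg at hwA
    rw [hends, h3w w hw hwA.2, h1w w hw hwA.1]
end
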